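/- arXiv:1507.05563 — 3 statements merged into one kernel-verified Lean document; each statement's English description precedes it below -/
import Mathlib

section
/- Let A be a unital algebra equipped with a coproduct Δ : A → A ⊗ A (a linear map satisfying coassociativity). If g and h are both unital linear functionals on A satisfying the Haar invariance property (id ⊗ h)∘Δ = h(·)·1_A = (h ⊗ id)∘Δ and the same for g, then g = h. -/
open TensorProduct

/-! Evaluate `g ⊗ h` on `Δ a` in the two possible orders: applying `h` first and using its right
invariance gives `h a * g 1 = h a`, applying `g` first and using its left invariance gives
`g a * h 1 = g a`. -/

theorem TensorProduct.apply_rid_map_id_eq_apply_lid_map_id {R M N : Type*} [CommSemiring R]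
    [AddCommMonoid M] [AddCommMonoid N] [Module R M] [Module R N]
    (f : M →ₗ[R] R) (g : N →ₗ[R] R) (t : M ⊗[R] N) :
    f (TensorProduct.rid R M (map LinearMap.id g t))
      = g (TensorProduct.lid R N (map f LinearMap.id t)) := by
  induction t using TensorProduct.induction_on with
  | zero => simp
  | tmul x y => simp [mul_comm]
  | add x y hx hy => simp [hx, hy]

theorem haar_functional_unique_general {A : Type*} [Ring A] [Algebra ℂ A]
    (Δ : A →ₗ[ℂ] A ⊗[ℂ] A)
    (g h : A →ₗ[ℂ] ℂ)
    (hg1 : g 1 = 1) (hh1 : h 1 = 1)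
    (hgL : ∀ a : A, (TensorProduct.lid ℂ A) ((TensorProduct.map g LinearMap.id) (Δ a))
      = g a • (1 : A))
    (hhR : ∀ a : A, (TensorProduct.rid ℂ A) ((TensorProduct.map LinearMap.id h) (Δ a))
      = h a • (1 : A)) :
    g = h := by
  ext a
  calc g a = h (g a • 1) := by rw [map_smul, hh1, smul_eq_mul, mul_one]
    _ = g (h a • 1) := by
      rw [← hgL, ← hhR, apply_rid_map_id_eq_apply_lid_map_id]
    _ = h a := by rw [map_smul, hg1, smul_eq_mul, mul_one]

/-- A unital algebra with a coassociative coproduct admits at most one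
unital linear functional with the Haar invariance property. -/
theorem haar_functional_unique {A : Type*} [Ring A] [Algebra ℂ A]
    (Δ : A →ₗ[ℂ] A ⊗[ℂ] A)
    (hcoassoc : ∀ a : A,
      (TensorProduct.map LinearMap.id Δ) (Δ a)
        = (TensorProduct.assoc ℂ A A A) ((TensorProduct.map Δ LinearMap.id) (Δ a)))
    (g h : A →ₗ[ℂ] ℂ)
    (hg1 : g 1 = 1) (hh1 : h 1 = 1)
    (hgR : ∀ a : A, (TensorProduct.rid ℂ A) ((TensorProduct.map LinearMap.id g) (Δ a))
      = g a • (1 : A))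
    (hgL : ∀ a : A, (TensorProduct.lid ℂ A) ((TensorProduct.map g LinearMap.id) (Δ a))
      = g a • (1 : A))
    (hhR : ∀ a : A, (TensorProduct.rid ℂ A) ((TensorProduct.map LinearMap.id h) (Δ a))
      = h a • (1 : A))
    (hhL : ∀ a : A, (TensorProduct.lid ℂ A) ((TensorProduct.map h LinearMap.id) (Δ a))
      = h a • (1 : A)) :
    g = h :=
  haar_functional_unique_general Δ g h hg1 hh1 hgL hhR
end

section
/- In L²(Sₙ), with 1̂ the constant function 1 and Q(·) the rank-one projection onto a given line: for any multi-indices i, j ∈ [n]^k, Q(1̂)Q(P̂_{i₁j₁})⋯Q(P̂_{iₖjₖ})Q(1̂) = δ(inf_I ker i, inf_I ker j) · (1/(n(n−1)^{b−1})) · Q(1̂), where b = |inf_I ker i| and inf_I ker i denotes the largest interval partition of [k] refining ker i (i.e., consecutive indices r, r+1 are in the same block iff i_r = i_{r+1}). -/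
open scoped Classical

/-- The rank-one orthogonal projection onto the line spanned by `ξ`. -/
noncomputable def Qproj {H : Type*} [NormedAddCommGroup H] [InnerProductSpace ℂ H]
    (ξ : H) (x : H) : H :=
  ((inner ℂ ξ x : ℂ) / ((‖ξ‖ : ℂ) ^ 2)) • ξ

/-- The vector `P̂_{ij} ∈ L²(Sₙ)`, `P̂_{ij}(σ) = δ_{i, σ(j)}`. -/
noncomputable def Phat (n : ℕ) (i j : Fin n) : EuclideanSpace ℂ (Equiv.Perm (Fin n)) :=
  (WithLp.equiv 2 (Equiv.Perm (Fin n) → ℂ)).symm fun σ => if σ j = i then 1 else 0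

/-- The constant function `1̂ ∈ L²(Sₙ)`. -/
noncomputable def oneHat (n : ℕ) : EuclideanSpace ℂ (Equiv.Perm (Fin n)) :=
  (WithLp.equiv 2 (Equiv.Perm (Fin n) → ℂ)).symm fun _ => 1

open Finset Equiv

variable {n : ℕ}

noncomputable def F1 (n : ℕ) (a b : Fin n) : Finset (Equiv.Perm (Fin n)) :=
  univ.filter fun σ => σ b = a

noncomputable def F2 (n : ℕ) (a b c d : Fin n) : Finset (Equiv.Perm (Fin n)) :=
  univ.filter fun σ => σ b = a ∧ σ d = c

lemma card_F1_eq (a b a' b' : Fin n) : (F1 n a b).card = (F1 n a' b').card := by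
  apply Finset.card_bij' (fun σ _ => Equiv.swap a a' * σ * Equiv.swap b b')
    (fun σ _ => Equiv.swap a a' * σ * Equiv.swap b b')
  · intro σ hσ
    simp only [F1, mem_filter, mem_univ, true_and] at hσ ⊢
    simp [Equiv.swap_apply_right, hσ]
  · intro σ hσ
    simp only [F1, mem_filter, mem_univ, true_and] at hσ ⊢
    simp [Equiv.swap_apply_right, hσ, Equiv.swap_apply_left]
  · intro σ _; ext x; simp [Equiv.swap_apply_self, Equiv.Perm.mul_apply]
  · intro σ _; ext x; simp [Equiv.swap_apply_self, Equiv.Perm.mul_apply]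

lemma n_mul_card_F1 (a b : Fin n) :
    n * (F1 n a b).card = Fintype.card (Equiv.Perm (Fin n)) := by
  have h := Finset.card_eq_sum_card_fiberwise
    (f := fun σ : Equiv.Perm (Fin n) => σ b) (s := univ) (t := univ) (fun x _ => mem_univ _)
  rw [Finset.card_univ] at h
  have h3 : Fintype.card (Equiv.Perm (Fin n)) = ∑ c : Fin n, (F1 n c b).card := by
    simpa [F1] using h
  rw [h3, Finset.sum_congr rfl fun c _ => card_F1_eq c b a b]
  simp [mul_comm]

lemma card_F1_sum (a b d : Fin n) :
    (F1 n a b).card = ∑ c, (F2 n a b c d).card := by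
  have h := Finset.card_eq_sum_card_fiberwise
    (f := fun σ : Equiv.Perm (Fin n) => σ d) (s := F1 n a b) (t := univ) (fun x _ => mem_univ _)
  rw [h]
  refine Finset.sum_congr rfl fun c _ => ?_
  congr 1
  ext σ; simp [F1, F2, and_comm]

lemma card_F2_congr (a b d : Fin n) {c c' : Fin n} (hc : c ≠ a) (hc' : c' ≠ a) :
    (F2 n a b c d).card = (F2 n a b c' d).card := by
  apply Finset.card_bij' (fun σ _ => Equiv.swap c c' * σ) (fun σ _ => Equiv.swap c c' * σ)
  · intro σ hσ
    simp only [F2, mem_filter, mem_univ, true_and] at hσ ⊢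
    obtain ⟨h1, h2⟩ := hσ
    constructor
    · simp [Equiv.Perm.mul_apply, h1, Equiv.swap_apply_of_ne_of_ne hc.symm hc'.symm]
    · simp [Equiv.Perm.mul_apply, h2, Equiv.swap_apply_left]
  · intro σ hσ
    simp only [F2, mem_filter, mem_univ, true_and] at hσ ⊢
    obtain ⟨h1, h2⟩ := hσ
    constructor
    · simp [Equiv.Perm.mul_apply, h1, Equiv.swap_apply_of_ne_of_ne hc.symm hc'.symm]
    · simp [Equiv.Perm.mul_apply, h2, Equiv.swap_apply_right]
  · intro σ _; ext x; simp [Equiv.Perm.mul_apply, Equiv.swap_apply_self]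
  · intro σ _; ext x; simp [Equiv.Perm.mul_apply, Equiv.swap_apply_self]

lemma F2_empty_of_ne (a b c : Fin n) {d : Fin n} (hbd : b ≠ d) (hac : a = c) :
    F2 n a b c d = ∅ := by
  subst hac
  ext σ
  simp only [F2, mem_filter, mem_univ, true_and, Finset.notMem_empty, iff_false, not_and]
  intro h1 h2
  exact hbd (σ.injective (h1.trans h2.symm))

lemma pred_mul_card_F2 {a b c d : Fin n} (hbd : b ≠ d) (hac : a ≠ c) :
    (n - 1) * (F2 n a b c d).card = (F1 n a b).card := by
  rw [card_F1_sum a b d]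
  rw [← Finset.sum_erase_add _ _ (mem_univ a)]
  rw [F2_empty_of_ne a b a hbd rfl]
  simp only [Finset.card_empty, add_zero]
  rw [Finset.sum_congr rfl (fun c' hc' => card_F2_congr a b d (Finset.mem_erase.1 hc').1 hac.symm)]
  simp [Finset.card_erase_of_mem, Fintype.card_fin, mul_comm]


lemma inner_oneHat_oneHat :
    (inner ℂ (oneHat n) (oneHat n) : ℂ) = (Fintype.card (Equiv.Perm (Fin n)) : ℂ) := by
  simp [oneHat, PiLp.inner_apply, RCLike.inner_apply, -inner_self_eq_norm_sq_to_K]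

lemma inner_oneHat_Phat (a b : Fin n) :
    (inner ℂ (oneHat n) (Phat n a b) : ℂ) = ((F1 n a b).card : ℂ) := by
  simp [oneHat, Phat, PiLp.inner_apply, RCLike.inner_apply, F1]

lemma inner_Phat_oneHat (a b : Fin n) :
    (inner ℂ (Phat n a b) (oneHat n) : ℂ) = ((F1 n a b).card : ℂ) := by
  simp [oneHat, Phat, PiLp.inner_apply, RCLike.inner_apply, F1, apply_ite (starRingEnd ℂ)]

lemma inner_Phat_Phat (a b c d : Fin n) :
    (inner ℂ (Phat n a b) (Phat n c d) : ℂ) = ((F2 n a b c d).card : ℂ) := by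
  simp only [Phat, PiLp.inner_apply, RCLike.inner_apply, WithLp.equiv_symm_apply, PiLp.toLp_apply,
    apply_ite (starRingEnd ℂ), map_one, map_zero, ite_mul, one_mul, zero_mul, mul_ite, mul_one,
    mul_zero, F2]
  rw [Finset.card_filter]
  push_cast
  refine Finset.sum_congr rfl fun σ _ => ?_
  by_cases h1 : σ b = a <;> by_cases h2 : σ d = c <;> simp [h1, h2]

lemma normsq_oneHat :
    ((‖oneHat n‖ : ℂ) ^ 2) = (Fintype.card (Equiv.Perm (Fin n)) : ℂ) := by
  rw [← inner_oneHat_oneHat]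
  exact (inner_self_eq_norm_sq_to_K (𝕜 := ℂ) (oneHat n)).symm

lemma normsq_Phat (a b : Fin n) :
    ((‖Phat n a b‖ : ℂ) ^ 2) = ((F1 n a b).card : ℂ) := by
  have : ((‖Phat n a b‖ : ℂ) ^ 2) = (inner ℂ (Phat n a b) (Phat n a b) : ℂ) :=
    (inner_self_eq_norm_sq_to_K (𝕜 := ℂ) (Phat n a b)).symm
  rw [this, inner_Phat_Phat]
  congr 1
  congr 1
  ext σ; simp [F1, F2]

lemma F1_card_ne_zero (a b : Fin n) : ((F1 n a b).card : ℂ) ≠ 0 := by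
  have : (Equiv.swap b a) ∈ F1 n a b := by simp [F1]
  have hpos : 0 < (F1 n a b).card := Finset.card_pos.2 ⟨_, this⟩
  exact_mod_cast hpos.ne'

lemma cardPerm_eq (a b : Fin n) :
    ((Fintype.card (Equiv.Perm (Fin n)) : ℂ)) = (n : ℂ) * ((F1 n a b).card : ℂ) := by
  rw [← n_mul_card_F1 a b]; push_cast; ring

lemma Qproj_smul {H : Type*} [NormedAddCommGroup H] [InnerProductSpace ℂ H]
    (ξ : H) (c : ℂ) (x : H) : Qproj ξ (c • x) = c • Qproj ξ x := by
  unfold Qproj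
  rw [inner_smul_right, smul_smul]
  congr 1
  ring

lemma Qproj_Phat_oneHat (a b : Fin n) : Qproj (Phat n a b) (oneHat n) = Phat n a b := by
  unfold Qproj
  rw [inner_Phat_oneHat, normsq_Phat, div_self (F1_card_ne_zero a b), one_smul]

lemma Qproj_oneHat_Phat (hn : 2 ≤ n) (a b : Fin n) :
    Qproj (oneHat n) (Phat n a b) = ((n : ℂ))⁻¹ • oneHat n := by
  unfold Qproj
  rw [inner_oneHat_Phat, normsq_oneHat, cardPerm_eq a b]
  congr 1
  rw [div_mul_eq_div_div_swap, div_self (F1_card_ne_zero a b), one_div]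

lemma F2_eq_F1 (a b : Fin n) : F2 n a b a b = F1 n a b := by
  ext σ; simp [F1, F2]

lemma Qproj_Phat_Phat (hn : 2 ≤ n) (a b c d : Fin n) :
    Qproj (Phat n a b) (Phat n c d) =
      (if a = c ∧ b = d then (1 : ℂ)
        else if a ≠ c ∧ b ≠ d then ((n : ℂ) - 1)⁻¹ else 0) • Phat n a b := by
  have hn1 : ((n : ℂ) - 1) ≠ 0 := by
    have h1 : (n : ℂ) ≠ 1 := by
      intro h; norm_cast at h; omega
    exact sub_ne_zero.2 h1
  unfold Qproj
  rw [inner_Phat_Phat, normsq_Phat]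
  congr 1
  by_cases hbd : b = d <;> by_cases hac : a = c
  · subst hbd; subst hac
    rw [F2_eq_F1]
    simp [div_self (F1_card_ne_zero a b)]
  · subst hbd
    have : F2 n a b c b = ∅ := by
      ext σ
      simp only [F2, Finset.mem_filter, Finset.mem_univ, true_and, Finset.notMem_empty,
        iff_false, not_and]
      intro h1 h2
      exact hac (h1.symm.trans h2)
    simp [this, hac]
  · subst hac
    rw [F2_empty_of_ne a b a hbd rfl]
    simp [hbd]
  · have key := pred_mul_card_F2 (a := a) (b := b) (c := c) (d := d) hbd hac
    have hcast : ((F1 n a b).card : ℂ) = ((n : ℂ) - 1) * ((F2 n a b c d).card : ℂ) := by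
      rw [← key]
      have h1n : 1 ≤ n := by omega
      push_cast [Nat.cast_sub h1n]
      ring
    rw [hcast]
    rw [if_neg (by tauto), if_pos ⟨hac, hbd⟩]
    rw [div_mul_eq_div_div_swap]
    have hF2 : ((F2 n a b c d).card : ℂ) ≠ 0 := by
      intro h0
      rw [h0, mul_zero] at hcast
      exact F1_card_ne_zero a b hcast
    rw [div_self hF2, one_div]

lemma foldr_comp_smul {H : Type*} [NormedAddCommGroup H] [InnerProductSpace ℂ H]
    (L : List (H → H)) (h : ∀ f ∈ L, ∀ (c : ℂ) x, f (c • x) = c • f x) (c : ℂ) (x : H) :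
    (L.foldr (· ∘ ·) id) (c • x) = c • (L.foldr (· ∘ ·) id) x := by
  induction L with
  | nil => simp
  | cons a L ih =>
    simp only [List.foldr_cons, Function.comp_apply]
    rw [ih (fun f hf => h f (by simp [hf])), h a (by simp)]

lemma chain_eval (hn : 2 ≤ n) :
    ∀ (k : ℕ) (i j : Fin (k + 1) → Fin n),
      ((List.ofFn fun l : Fin (k + 1) => Qproj (Phat n (i l) (j l))).foldr (· ∘ ·) id)
          (oneHat n)
        = (if ∀ l : Fin k, (i l.castSucc = i l.succ ↔ j l.castSucc = j l.succ) then
              (((n : ℂ) - 1)⁻¹)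
                ^ ((Finset.univ.filter fun l : Fin k => i l.castSucc ≠ i l.succ).card)
            else 0) • Phat n (i 0) (j 0) := by
  intro k
  induction k with
  | zero =>
    intro i j
    simp [List.ofFn_succ, Qproj_Phat_oneHat]
  | succ k IH =>
    intro i j
    rw [List.ofFn_succ]
    simp only [List.foldr_cons, Function.comp_apply]
    rw [IH (fun l => i l.succ) (fun l => j l.succ)]
    rw [Qproj_smul, Qproj_Phat_Phat hn]
    rw [smul_smul]
    congr 1
    -- now a scalar identity
    set t : ℂ := ((n : ℂ) - 1)⁻¹ with ht
    have hsplit : (∀ l : Fin (k + 1), (i l.castSucc = i l.succ ↔ j l.castSucc = j l.succ))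
        ↔ ((i 0 = i 1 ↔ j 0 = j 1) ∧
            ∀ l : Fin k, (i l.castSucc.succ = i l.succ.succ ↔ j l.castSucc.succ = j l.succ.succ)) := by
      rw [Fin.forall_fin_succ]
      simp [Fin.succ_castSucc, -Fin.castSucc_succ]
    have hcard : (Finset.univ.filter fun l : Fin (k + 1) => i l.castSucc ≠ i l.succ).card
        = (if i 0 ≠ i 1 then 1 else 0)
          + (Finset.univ.filter fun l : Fin k => i l.castSucc.succ ≠ i l.succ.succ).card := by
      rw [Finset.card_filter, Fin.sum_univ_succ, Finset.card_filter]
      simp [Fin.succ_castSucc, -Fin.castSucc_succ]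
      by_cases h : i 0 = i 1 <;> simp [h]
    have hz : ((0 : Fin (k+1)).succ : Fin (k+2)) = 1 := rfl
    rw [hz]
    by_cases hrest : ∀ l : Fin k,
        (i l.castSucc.succ = i l.succ.succ ↔ j l.castSucc.succ = j l.succ.succ)
    · by_cases hij : (i 0 = i 1 ↔ j 0 = j 1)
      · rw [if_pos hrest, if_pos (hsplit.2 ⟨hij, hrest⟩), hcard]
        by_cases hi : i 0 = i 1
        · have hj : j 0 = j 1 := hij.1 hi
          rw [if_pos ⟨hi, hj⟩, if_neg (by simpa using hi)]
          ring
        · have hj : ¬ j 0 = j 1 := fun h => hi (hij.2 h)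
          rw [if_neg (by tauto), if_pos ⟨hi, hj⟩, if_pos hi]
          ring
      · rw [if_neg (fun h => hij (hsplit.1 h).1)]
        have : ¬ (i 0 = i 1 ∧ j 0 = j 1) := by tauto
        rw [if_neg this]
        have : ¬ (i 0 ≠ i 1 ∧ j 0 ≠ j 1) := by tauto
        rw [if_neg this]
        ring
    · rw [if_neg hrest, if_neg (fun h => hrest (hsplit.1 h).2)]
      ring

/-- For multi-indices `i, j ∈ [n]^(k+1)`,
`Q(1̂)Q(P̂_{i₁j₁})⋯Q(P̂_{i_{k+1}j_{k+1}})Q(1̂)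
  = δ(inf_I ker i, inf_I ker j) · (1/(n(n-1)^{b-1})) · Q(1̂)`,
where `b = |inf_I ker i|` is one plus the number of break points of `i` (the interval
partitions `inf_I ker i` and `inf_I ker j` coincide iff `i` and `j` have the same
break points). -/
theorem Qproj_oneHat_sandwich (n k : ℕ) (hn : 2 ≤ n) (i j : Fin (k + 1) → Fin n) :
    ∀ x : EuclideanSpace ℂ (Equiv.Perm (Fin n)),
      Qproj (oneHat n)
        (((List.ofFn fun l : Fin (k + 1) => Qproj (Phat n (i l) (j l))).foldr
            (· ∘ ·) id) (Qproj (oneHat n) x))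
        = (if ∀ l : Fin k, (i l.castSucc = i l.succ ↔ j l.castSucc = j l.succ) then
              (1 : ℂ) / ((n : ℂ) * ((n : ℂ) - 1)
                ^ ((Finset.univ.filter fun l : Fin k => i l.castSucc ≠ i l.succ).card))
            else 0) • Qproj (oneHat n) x := by
  intro x
  have hQ : Qproj (oneHat n) x
      = ((inner ℂ (oneHat n) x : ℂ) / ((‖oneHat n‖ : ℂ) ^ 2)) • oneHat n := rfl
  rw [hQ]
  rw [foldr_comp_smul _ (fun f hf c y => by
    obtain ⟨l, rfl⟩ := List.mem_ofFn.1 hf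
    exact Qproj_smul _ c y)]
  rw [chain_eval hn k i j, Qproj_smul, Qproj_smul, Qproj_oneHat_Phat hn]
  rw [smul_smul, smul_smul, smul_smul]
  congr 1
  split_ifs with h <;> ring
end

section
/- Let B ⊆ A be *-algebras with a conditional expectation E : A → B, and let (x_j)_{j∈ℕ} be self-adjoint elements of A that are Boolean independent and identically distributed over (E, B) in the sense that E[b₀ x_{j₁} b₁ x_{j₂} b₂ ⋯ x_{jₖ} bₖ] = b₀ · ∏→_{V ∈ inf_I ker j} E[∏→_{l ∈ V} x_{j_l} b_l] for all indices and b_i ∈ B ∪ {1_A}. Then E[b₀ x_{j₁} b₁ ⋯ x_{jₖ} bₖ] = ∑_{π ∈ I(k), π ≤ ker j} K^E_π[b₀ x₁ b₁, x₁ b₂, …, x₁ bₖ]. -/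
open scoped Classical

/-- The Boolean cumulant `K_π` for an interval partition `π` of `[k]` (encoded as a
composition): the ordered product over blocks of the full cumulants `K`. -/
def Kpi {A : Type*} [Ring A] (K : (k : ℕ) → (Fin k → A) → A) {k : ℕ}
    (c : Composition k) (y : Fin k → A) : A :=
  (List.ofFn fun i : Fin c.length => K (c.blocksFun i) fun t => y (c.embedding i t)).prod

/-- The partitioned moment `E^π[y₁,…,y_k]`: the ordered product over the blocks `V`
of `π` of `E[∏_{l ∈ V} y_l]`. -/
def Epi {A : Type*} [Ring A] (E : A →+ A) {k : ℕ}
    (c : Composition k) (y : Fin k → A) : A :=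
  (List.ofFn fun i : Fin c.length =>
    E ((List.ofFn fun t => y (c.embedding i t)).prod)).prod

namespace BooleanIID


/-- chain equality along adjacent pairs -/
theorem chain_eq {k : ℕ} {α : Sort*} (f : Fin (k+1) → α) (s : Fin (k+1)) :
    ∀ (r : Fin (k+1)), r ≤ s →
    (∀ l : Fin k, r ≤ l.castSucc → l.succ ≤ s → f l.castSucc = f l.succ) → f r = f s := by
  induction s using Fin.induction with
  | zero =>
    intro r hr _
    have : r = 0 := le_antisymm hr (Fin.zero_le r)
    rw [this]
  | succ i ih =>
    intro r hr hadj
    rcases eq_or_lt_of_le hr with h | h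
    · rw [h]
    · have hr' : r ≤ i.castSucc := by
        rw [Fin.lt_def] at h
        rw [Fin.le_def]
        simp only [Fin.coe_castSucc]
        have := i.succ.is_le
        simp only [Fin.val_succ] at h
        omega
      have h1 : f r = f i.castSucc := by
        apply ih r hr'
        intro l hl1 hl2
        refine hadj l hl1 (le_trans hl2 ?_)
        rw [Fin.le_def]
        simp
      rw [h1]
      exact hadj i hr' le_rfl

/-- take-sum of flatten -/
theorem sum_take_flatten_aux : ∀ (L : List (List ℕ)) (i m : ℕ) (hi : i < L.length),
    m ≤ (L[i]).length →
    ((L.flatten).take ((((L.map List.length).take i).sum) + m)).sum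
      = ((L.take i).flatten).sum + ((L[i]'hi).take m).sum := by
  intro L
  induction L with
  | nil => intro i m hi; simp at hi
  | cons a L ih =>
    intro i m hi hm
    cases i with
    | zero =>
      simp only [List.take_zero, List.sum_nil, List.flatten_nil, List.getElem_cons_zero,
        Nat.zero_add] at *
      rw [List.flatten_cons, List.take_append_of_le_length hm]
    | succ i =>
      simp only [List.getElem_cons_succ] at hm ⊢
      have hi' : i < L.length := by simpa using hi
      rw [List.flatten_cons, List.map_cons, List.take_succ_cons, List.sum_cons, add_assoc,
        List.take_length_add_append, List.sum_append, List.take_succ_cons, List.flatten_cons,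
        List.sum_append, ih i m hi' hm, add_assoc]

/-- positive lists: equal-sum prefixes of the same list agree -/
theorem pos_prefix_eq : ∀ (l1 l2 r1 r2 : List ℕ), (∀ x ∈ l1, 0 < x) → (∀ x ∈ l2, 0 < x) →
    l1 ++ r1 = l2 ++ r2 → l1.sum = l2.sum → l1 = l2 := by
  intro l1
  induction l1 with
  | nil =>
    intro l2 r1 r2 _ h2 _ hsum
    cases l2 with
    | nil => rfl
    | cons b t =>
      exfalso
      have hb := h2 b (by simp)
      rw [List.sum_nil, List.sum_cons] at hsum; omega
  | cons a t1 ih =>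
    intro l2 r1 r2 h1 h2 happ hsum
    cases l2 with
    | nil =>
      exfalso; have ha := h1 a (by simp); rw [List.sum_cons, List.sum_nil] at hsum; omega
    | cons b t2 =>
      simp only [List.cons_append, List.cons.injEq] at happ
      obtain ⟨rfl, happ'⟩ := happ
      simp only [List.sum_cons, add_right_inj] at hsum
      rw [ih t2 r1 r2 (fun x hx => h1 x (by simp [hx])) (fun x hx => h2 x (by simp [hx])) happ' hsum]

/-- flatten injectivity for positive lists of lists with matching sums -/
theorem flatten_inj : ∀ (L L' : List (List ℕ)), L.length = L'.length →
    (∀ l ∈ L, ∀ x ∈ l, 0 < x) → (∀ l ∈ L', ∀ x ∈ l, 0 < x) →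
    (∀ (i : ℕ) (hi : i < L.length) (hi' : i < L'.length), (L[i]).sum = (L'[i]).sum) →
    L.flatten = L'.flatten → L = L' := by
  intro L
  induction L with
  | nil => intro L' hlen _ _ _ _; cases L'; rfl; simp at hlen
  | cons a L ih =>
    intro L' hlen h1 h2 hsum hfl
    cases L' with
    | nil => simp at hlen
    | cons b L'' =>
    simp only [List.flatten_cons] at hfl
    have hab : a = b := by
      apply pos_prefix_eq a b _ _ (h1 a (by simp)) (h2 b (by simp)) hfl
      exact hsum 0 (by simp) (by simp)
    subst hab
    have hfl' : L.flatten = L''.flatten := List.append_cancel_left hfl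
    rw [ih L'' (by simpa using hlen) (fun l hl => h1 l (by simp [hl]))
      (fun l hl => h2 l (by simp [hl]))
      (fun i hi hi' => by
        exact hsum (i+1) (by simpa using Nat.succ_lt_succ hi)
          (by simpa using Nat.succ_lt_succ hi')) hfl']

/-- monotonicity of take-sums -/
theorem sum_take_mono (Q : List ℕ) {u v : ℕ} (huv : u ≤ v) :
    (Q.take u).sum ≤ (Q.take v).sum := by
  rw [← List.take_append_drop u (Q.take v), List.take_take, min_eq_left huv]
  simp

/-- surjectivity: splitting a positive list along prescribed partial sums -/
theorem split_exists : ∀ (P Q : List ℕ), (∀ x ∈ P, 0 < x) → (∀ x ∈ Q, 0 < x) →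
    P.sum = Q.sum →
    (∀ (i : ℕ), i ≤ P.length → ∃ i', (Q.take i').sum = (P.take i).sum) →
    ∃ R : List (List ℕ), R.length = P.length ∧
      (∀ (i : ℕ) (hi : i < P.length) (hi' : i < R.length), (R[i]).sum = P[i]) ∧
      R.flatten = Q := by
  intro P
  induction P with
  | nil =>
    intro Q _ hQ hsum _
    refine ⟨[], rfl, by intro i hi; simp at hi, ?_⟩
    simp only [List.flatten_nil]
    symm
    rcases Q with _ | ⟨b, t⟩
    · rfl
    · exfalso; have hb := hQ b (by simp)
      rw [List.sum_nil, List.sum_cons] at hsum; omega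
  | cons p P ih =>
    intro Q hP hQ hsum hps
    obtain ⟨m, hm⟩ := hps 1 (by simp)
    have hm' : (Q.take m).sum = p := by
      rw [hm]; simp
    obtain ⟨R, hR1, hR2, hR3⟩ := ih (Q.drop m) (fun x hx => hP x (by simp [hx]))
      (fun x hx => hQ x (List.mem_of_mem_drop hx))
      (by
        have h := List.sum_take_add_sum_drop Q m
        rw [List.sum_cons] at hsum
        omega)
      (fun i hi => by
        obtain ⟨i', hi'⟩ := hps (i+1) (by simpa using hi)
        rw [List.take_succ_cons, List.sum_cons] at hi'
        have key : ∃ i'' , m ≤ i'' ∧ (Q.take i'').sum = p + (P.take i).sum := by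
          rcases le_or_gt m i' with h | h
          · exact ⟨i', h, hi'⟩
          · refine ⟨m, le_rfl, ?_⟩
            have h1 := sum_take_mono Q (le_of_lt h)
            have h2 : (Q.take i').sum ≥ p := by omega
            omega
        obtain ⟨i'', hle, hval⟩ := key
        refine ⟨i'' - m, ?_⟩
        have hsplit : Q.take i'' = Q.take m ++ (Q.drop m).take (i'' - m) := by
          rw [← List.take_add, Nat.add_sub_cancel' hle]
        rw [hsplit, List.sum_append, hm'] at hval
        omega)
    refine ⟨Q.take m :: R, by simpa using hR1, ?_, ?_⟩
    · intro i hi hi'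
      cases i with
      | zero => simpa using hm'
      | succ i =>
        simp only [List.getElem_cons_succ]
        exact hR2 i (by simpa using hi) (by simpa using hi')
    · rw [List.flatten_cons, hR3, List.take_append_drop]



/-- index is monotone -/
theorem index_mono {n : ℕ} (c : Composition n) {r s : Fin n} (h : r ≤ s) :
    c.index r ≤ c.index s := by
  have hs := c.lt_sizeUpTo_index_succ s
  -- index r = Nat.find ...
  rw [Fin.le_def]
  exact Nat.find_min' (c.index_exists r.2) ⟨lt_of_le_of_lt (by exact_mod_cast h) hs, (c.index s).2⟩

theorem index_zero' {n : ℕ} (c : Composition (n+1)) : (c.index 0 : ℕ) = 0 := by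
  have h := c.sizeUpTo_index_le 0
  simp only [Fin.val_zero, Nat.le_zero] at h
  by_contra hne
  have hpos : 0 < ((c.index 0) : ℕ) := Nat.pos_of_ne_zero hne
  have h1 : c.sizeUpTo 1 ≤ c.sizeUpTo (c.index 0) := c.monotone_sizeUpTo hpos
  have hlen : 0 < c.length := c.length_pos_of_pos (Nat.succ_pos n)
  have h2 : c.sizeUpTo 0 < c.sizeUpTo 1 := c.sizeUpTo_strict_mono hlen
  rw [Composition.sizeUpTo_zero] at h2
  omega

/-- `l+1` is a boundary point of `c` -/
def Brk {k : ℕ} (c : Composition (k+1)) (l : Fin k) : Prop :=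
  ∃ i : ℕ, c.sizeUpTo i = (l : ℕ) + 1

theorem brk_iff {k : ℕ} (c : Composition (k+1)) (l : Fin k) :
    c.index l.castSucc ≠ c.index l.succ ↔ Brk c l := by
  have h1a := c.sizeUpTo_index_le l.castSucc
  have h1b := c.lt_sizeUpTo_index_succ l.castSucc
  have h2a := c.sizeUpTo_index_le l.succ
  have h2b := c.lt_sizeUpTo_index_succ l.succ
  simp only [Fin.coe_castSucc, Fin.val_succ] at h1a h1b h2a h2b
  constructor
  · intro hne
    have hmono : c.index l.castSucc ≤ c.index l.succ := index_mono c (by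
      rw [Fin.le_def]; simp)
    have hlt : (c.index l.castSucc : ℕ) < (c.index l.succ : ℕ) :=
      lt_of_le_of_ne (by exact_mod_cast hmono) (fun hh => hne (Fin.ext hh))
    refine ⟨c.index l.succ, le_antisymm h2a ?_⟩
    have : c.sizeUpTo ((c.index l.castSucc : ℕ) + 1) ≤ c.sizeUpTo (c.index l.succ) :=
      c.monotone_sizeUpTo hlt
    omega
  · rintro ⟨i, hi⟩ heq
    -- sizeUpTo i = l + 1, with index l.castSucc = index l.succ
    rw [heq] at h1a h1b
    -- h1a : sizeUpTo (index l.succ) ≤ l, h2b : l + 1 < sizeUpTo (index l.succ + 1)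
    -- so index of the boundary: sizeUpTo i = l+1 with sizeUpTo (idx) ≤ l < l+1 < sizeUpTo (idx+1)
    have hgt : ((c.index l.succ : ℕ)) < i := by
      by_contra hle
      push_neg at hle
      have := c.monotone_sizeUpTo hle
      omega
    have : c.sizeUpTo ((c.index l.succ : ℕ) + 1) ≤ c.sizeUpTo i := c.monotone_sizeUpTo hgt
    omega

theorem brk_lt_length {k : ℕ} (c : Composition (k+1)) (l : Fin k) (h : Brk c l) :
    ∃ i : ℕ, i < c.length ∧ c.sizeUpTo i = (l : ℕ) + 1 := by
  obtain ⟨i, hi⟩ := h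
  refine ⟨i, ?_, hi⟩
  by_contra hle
  push_neg at hle
  rw [c.sizeUpTo_ofLength_le i hle] at hi
  have := l.2
  omega

/-- two positions in the same block: all adjacent pairs in between are in the same block -/
theorem index_eq_of_between {k : ℕ} (c : Composition (k+1)) {r s : Fin (k+1)} (hrs : r ≤ s)
    (h : c.index r = c.index s) (l : Fin k) (h1 : r ≤ l.castSucc) (h2 : l.succ ≤ s) :
    c.index l.castSucc = c.index l.succ := by
  have m1 := index_mono c h1
  have m2 := index_mono c (show l.castSucc ≤ l.succ by rw [Fin.le_def]; simp)
  have m3 := index_mono c h2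
  rw [h] at m1
  exact le_antisymm m2 (le_trans m3 m1)



/-- The interval partition `inf_I ker j`, as a `CompositionAsSet`: boundaries are `0`, `k+1`,
and the points `l+1` where `j` jumps. -/
def runCAS {k : ℕ} (j : Fin (k+1) → ℕ) : CompositionAsSet (k+1) where
  boundaries := Finset.univ.filter (fun i : Fin (k+2) =>
    i = 0 ∨ i = Fin.last (k+1) ∨ ∃ l : Fin k, (i : ℕ) = (l : ℕ) + 1 ∧ j l.castSucc ≠ j l.succ)
  zero_mem := by simp
  getLast_mem := by simp

/-- The run composition of `j`. -/
def runC {k : ℕ} (j : Fin (k+1) → ℕ) : Composition (k+1) := (runCAS j).toComposition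

theorem runC_brk_iff {k : ℕ} (j : Fin (k+1) → ℕ) (l : Fin k) :
    (∃ i : ℕ, (runC j).sizeUpTo i = (l : ℕ) + 1) ↔ j l.castSucc ≠ j l.succ := by
  have hblocks : (runC j).blocks = (runCAS j).blocks := rfl
  have hmem : ∀ i : ℕ, (runC j).sizeUpTo i = ((runC j).blocks.take i).sum := fun _ => rfl
  constructor
  · rintro ⟨i, hi⟩
    have hlt : i < (runCAS j).boundaries.card := by
      by_contra hle
      push_neg at hle
      have h2 : (runCAS j).blocks.length < i := by
        have := (runCAS j).card_boundaries_eq_succ_length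
        have := (runCAS j).blocks_length
        omega
      rw [hmem, hblocks, List.take_of_length_le (le_of_lt h2), (runCAS j).blocks_sum] at hi
      have := l.2
      omega
    have hb : (⟨(l : ℕ) + 1, by omega⟩ : Fin (k+2)) ∈ (runCAS j).boundaries := by
      rw [CompositionAsSet.mem_boundaries_iff_exists_blocks_sum_take_eq]
      exact ⟨i, hlt, by rw [← hblocks, ← hmem, hi]⟩
    simp only [runCAS, Finset.mem_filter, Finset.mem_univ, true_and] at hb
    rcases hb with h0 | hlast | ⟨l', hl', hj⟩
    · exact absurd (congrArg Fin.val h0) (by simp)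
    · exfalso
      have := congrArg Fin.val hlast
      simp only [Fin.val_last] at this
      have := l.2
      omega
    · have : l = l' := Fin.ext (by simpa using hl')
      rwa [this]
  · intro hj
    have hb : (⟨(l : ℕ) + 1, by omega⟩ : Fin (k+2)) ∈ (runCAS j).boundaries := by
      simp only [runCAS, Finset.mem_filter, Finset.mem_univ, true_and]
      exact Or.inr (Or.inr ⟨l, rfl, hj⟩)
    rw [CompositionAsSet.mem_boundaries_iff_exists_blocks_sum_take_eq] at hb
    obtain ⟨i, hi, hsum⟩ := hb
    exact ⟨i, by rw [hmem, hblocks]; exact hsum⟩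


section Split


theorem prod_split_list {A : Type*} [Monoid A] (l : List A) (c : Composition l.length) :
    l.prod = (List.ofFn fun i : Fin c.length =>
      (List.ofFn fun t : Fin (c.blocksFun i) =>
        l[(c.embedding i t : ℕ)]'((c.embedding i t).2)).prod).prod := by
  conv_lhs => rw [← List.flatten_splitWrtComposition l c]
  rw [List.prod_flatten]
  congr 1
  apply List.ext_getElem
  · simp [List.length_splitWrtComposition]
  · intro i hi1 hi2
    simp only [List.length_map, List.length_splitWrtComposition] at hi1
    simp only [List.getElem_map, List.getElem_ofFn]
    rw [List.getElem_splitWrtComposition]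
    congr 1
    apply List.ext_getElem
    · simp only [List.length_ofFn, List.length_drop, List.length_take]
      have h1 : c.sizeUpTo (i+1) ≤ l.length := c.sizeUpTo_le _
      have h2 := c.sizeUpTo_succ (show i < c.length from hi1)
      rw [min_eq_left h1, h2]
      simp only [Composition.blocksFun, List.get_eq_getElem]
      omega
    · intro t ht1 ht2
      simp only [List.getElem_drop, List.getElem_take, List.getElem_ofFn]
      congr 1

/-- ordered product splits along a composition -/
theorem prod_ofFn_split {A : Type*} [Monoid A] {N : ℕ} (c : Composition N) (f : Fin N → A) :
    (List.ofFn f).prod = (List.ofFn fun i : Fin c.length =>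
      (List.ofFn fun t : Fin (c.blocksFun i) => f (c.embedding i t)).prod).prod := by
  have hlen : (List.ofFn f).length = N := List.length_ofFn
  have h := prod_split_list (List.ofFn f)
    ⟨c.blocks, c.blocks_pos, by rw [hlen]; exact c.blocks_sum⟩
  simp only [List.getElem_ofFn] at h
  exact h

/-- distribute an ordered product of sums -/
theorem prod_ofFn_sum {A : Type*} [NonAssocSemiring A] : ∀ {m : ℕ} (σ : Fin m → Type)
    [∀ i, Fintype (σ i)] (f : (i : Fin m) → σ i → A),
    (List.ofFn fun i => ∑ d : σ i, f i d).prod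
      = ∑ g : (∀ i, σ i), (List.ofFn fun i => f i (g i)).prod := by
  intro m
  induction m with
  | zero =>
    intro σ _ f
    simp [List.ofFn_zero, Finset.sum_const, Fintype.card_pi]
  | succ m ih =>
    intro σ _ f
    rw [List.ofFn_succ, List.prod_cons]
    rw [ih (fun i => σ i.succ) (fun i d => f i.succ d)]
    rw [Finset.sum_mul_sum]
    rw [← (Equiv.sum_comp (Fin.consEquiv σ) (fun g => (List.ofFn fun i => f i (g i)).prod))]
    rw [Fintype.sum_prod_type]
    apply Finset.sum_congr rfl
    intro d _
    apply Finset.sum_congr rfl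
    intro g _
    rw [List.ofFn_succ, List.prod_cons]
    simp [Fin.consEquiv]


end Split

variable {n : ℕ}


variable {n : ℕ} (c : Composition n) (g : ∀ i : Fin c.length, Composition (c.blocksFun i))

/-- join of a refinement family -/
def joinComp : Composition n where
  blocks := (List.ofFn fun i => (g i).blocks).flatten
  blocks_pos := by
    intro x hx
    rw [List.mem_flatten] at hx
    obtain ⟨l, hl, hxl⟩ := hx
    rw [List.mem_ofFn] at hl
    obtain ⟨i, rfl⟩ := hl
    exact (g i).blocks_pos hxl
  blocks_sum := by
    rw [List.sum_flatten, List.map_ofFn]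
    have h : (List.sum ∘ fun i => (g i).blocks) = c.blocksFun :=
      funext fun i => (g i).blocks_sum
    rw [h, c.ofFn_blocksFun, c.blocks_sum]

theorem joinComp_length : (joinComp c g).length = (List.ofFn fun i => (g i).length).sum := by
  simp only [joinComp, Composition.length, List.length_flatten, List.map_ofFn]
  rfl

/-- the composition of `(joinComp c g).length` recording the lengths of the pieces -/
def lenComp : Composition ((joinComp c g).length) where
  blocks := List.ofFn fun i => (g i).length
  blocks_pos := by
    intro x hx
    rw [List.mem_ofFn] at hx
    obtain ⟨i, rfl⟩ := hx
    exact (g i).length_pos_of_pos (c.blocks_pos (c.blocksFun_mem_blocks i))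
  blocks_sum := (joinComp_length c g).symm

theorem lenComp_length : (lenComp c g).length = c.length := by
  simp [lenComp, Composition.length]

theorem lenComp_sizeUpTo (i : ℕ) :
    (lenComp c g).sizeUpTo i = ((List.ofFn fun i' => (g i').length).take i).sum := rfl

/-- key: sizeUpTo of the join -/
theorem joinComp_sizeUpTo (i : ℕ) (hi : i < c.length) (m : ℕ)
    (hm : m ≤ (g ⟨i, hi⟩).length) :
    (joinComp c g).sizeUpTo ((lenComp c g).sizeUpTo i + m)
      = c.sizeUpTo i + (g ⟨i, hi⟩).sizeUpTo m := by
  have hL : (List.ofFn fun i' => (g i').blocks).length = c.length := by simp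
  have key := sum_take_flatten_aux (List.ofFn fun i' => (g i').blocks) i m
    (by omega) (by simpa using hm)
  simp only [List.getElem_ofFn] at key
  have e1 : (joinComp c g).sizeUpTo ((lenComp c g).sizeUpTo i + m)
      = ((List.ofFn fun i' => (g i').blocks).flatten.take
          ((((List.ofFn fun i' => (g i').blocks).map List.length).take i).sum + m)).sum := by
    rw [lenComp_sizeUpTo]
    rw [List.map_ofFn]
    rfl
  have e2 : (((List.ofFn fun i' => (g i').blocks).take i).flatten).sum = c.sizeUpTo i := by
    rw [List.sum_flatten, List.map_take, List.map_ofFn]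
    have h : (List.sum ∘ fun i' => (g i').blocks) = c.blocksFun :=
      funext fun i' => (g i').blocks_sum
    rw [h, c.ofFn_blocksFun]
    rfl
  rw [e1, key, e2]
  rfl

theorem joinComp_blocksFun (i : ℕ) (hi : i < c.length) (m : ℕ)
    (hm : m < (g ⟨i, hi⟩).length)
    (hJ : (lenComp c g).sizeUpTo i + m < (joinComp c g).length) :
    (joinComp c g).blocksFun ⟨(lenComp c g).sizeUpTo i + m, hJ⟩
      = (g ⟨i, hi⟩).blocksFun ⟨m, hm⟩ := by
  have h1 := (joinComp c g).sizeUpTo_succ hJ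
  have h2 := (g ⟨i, hi⟩).sizeUpTo_succ hm
  have e1 := joinComp_sizeUpTo c g i hi m (le_of_lt hm)
  have e2 := joinComp_sizeUpTo c g i hi (m+1) hm
  rw [show (lenComp c g).sizeUpTo i + m + 1 = (lenComp c g).sizeUpTo i + (m+1) from by omega]
    at h1
  have e3 : (g ⟨i, hi⟩).blocks[m]'(hm) = (g ⟨i, hi⟩).blocksFun ⟨m, hm⟩ := rfl
  have e4 : (joinComp c g).blocks[(lenComp c g).sizeUpTo i + m]'(hJ)
      = (joinComp c g).blocksFun ⟨(lenComp c g).sizeUpTo i + m, hJ⟩ := rfl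
  omega

theorem joinComp_embedding_val (i : ℕ) (hi : i < c.length) (m : ℕ)
    (hm : m < (g ⟨i, hi⟩).length)
    (hJ : (lenComp c g).sizeUpTo i + m < (joinComp c g).length)
    (t : Fin ((joinComp c g).blocksFun ⟨(lenComp c g).sizeUpTo i + m, hJ⟩)) :
    (((joinComp c g).embedding ⟨(lenComp c g).sizeUpTo i + m, hJ⟩ t : Fin n) : ℕ)
      = c.sizeUpTo i + ((g ⟨i, hi⟩).sizeUpTo m + (t : ℕ)) := by
  rw [Composition.coe_embedding, joinComp_sizeUpTo c g i hi m (le_of_lt hm)]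
  omega

/-- every boundary of `c` is a boundary of the join -/
theorem joinComp_boundary (i : ℕ) :
    ∃ i', (joinComp c g).sizeUpTo i' = c.sizeUpTo i := by
  rcases lt_or_ge i c.length with hi | hi
  · refine ⟨(lenComp c g).sizeUpTo i, ?_⟩
    have := joinComp_sizeUpTo c g i hi 0 (Nat.zero_le _)
    simpa using this
  · refine ⟨(joinComp c g).length, ?_⟩
    rw [(joinComp c g).sizeUpTo_length, c.sizeUpTo_ofLength_le i hi]

theorem joinComp_injective {g g' : ∀ i : Fin c.length, Composition (c.blocksFun i)}
    (h : joinComp c g = joinComp c g') : g = g' := by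
  have hb : (joinComp c g).blocks = (joinComp c g').blocks := by rw [h]
  simp only [joinComp] at hb
  have := flatten_inj (List.ofFn fun i => (g i).blocks) (List.ofFn fun i => (g' i).blocks)
    (by simp)
    (fun l hl => by
      rw [List.mem_ofFn] at hl; obtain ⟨i, rfl⟩ := hl; exact fun x hx => (g i).blocks_pos hx)
    (fun l hl => by
      rw [List.mem_ofFn] at hl; obtain ⟨i, rfl⟩ := hl; exact fun x hx => (g' i).blocks_pos hx)
    (fun i hi hi' => by
      simp only [List.getElem_ofFn]
      rw [(g _).blocks_sum, (g' _).blocks_sum])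
    hb
  funext i
  apply Composition.ext
  have hlen : i.val < (List.ofFn fun i => (g i).blocks).length := by
    simpa using i.2
  have h2 := List.getElem_of_eq this hlen
  simpa using h2

theorem joinComp_surjective (c' : Composition n)
    (hbd : ∀ i : ℕ, i ≤ c.length → ∃ i', c'.sizeUpTo i' = c.sizeUpTo i) :
    ∃ g : ∀ i : Fin c.length, Composition (c.blocksFun i), joinComp c g = c' := by
  obtain ⟨R, hR1, hR2, hR3⟩ := split_exists c.blocks c'.blocks
    (fun x hx => c.blocks_pos hx) (fun x hx => c'.blocks_pos hx)
    (by rw [c.blocks_sum, c'.blocks_sum])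
    (fun i hi => by
      obtain ⟨i', hi'⟩ := hbd i hi
      exact ⟨i', hi'⟩)
  have hRlen : R.length = c.length := hR1
  refine ⟨fun i => ⟨R[i.val]'(by omega), ?_, ?_⟩, ?_⟩
  · intro x hx
    have hmem : R[i.val]'(by omega) ∈ R := List.getElem_mem _
    have : x ∈ R.flatten := List.mem_flatten.2 ⟨_, hmem, hx⟩
    rw [hR3] at this
    exact c'.blocks_pos this
  · exact hR2 i.val i.2 (by omega)
  · apply Composition.ext
    simp only [joinComp]
    rw [← hR3]
    congr 1
    apply List.ext_getElem (by simpa using hRlen.symm)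
    intro u hu1 hu2
    simp



theorem lenComp_blocksFun (i : Fin (lenComp c g).length) :
    (lenComp c g).blocksFun i = (g (Fin.cast (lenComp_length c g) i)).length := by
  simp only [Composition.blocksFun, lenComp, List.get_ofFn, List.get_eq_getElem, List.getElem_ofFn]
  exact List.get_ofFn _ _

theorem K_congr {A : Type*} (K : (k : ℕ) → (Fin k → A) → A) {a b : ℕ} (h : a = b)
    (u : Fin a → A) (v : Fin b → A) (huv : ∀ t : Fin b, u (Fin.cast h.symm t) = v t) :
    K a u = K b v := by
  subst h
  congr 1
  funext t
  exact huv t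

theorem Kpi_joinComp {A : Type*} [Ring A] (K : (k : ℕ) → (Fin k → A) → A) (y : Fin n → A) :
    Kpi K (joinComp c g) y
      = (List.ofFn fun i : Fin c.length =>
          Kpi K (g i) fun t => y (c.embedding i t)).prod := by
  show (List.ofFn fun J : Fin (joinComp c g).length =>
      K ((joinComp c g).blocksFun J) fun t => y ((joinComp c g).embedding J t)).prod = _
  rw [prod_ofFn_split (lenComp c g)]
  congr 1
  apply List.ext_getElem
  · simp [lenComp_length]
  · intro i hi1 hi2
    simp only [List.length_ofFn] at hi1 hi2
    simp only [List.getElem_ofFn]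
    show (List.ofFn fun m : Fin ((lenComp c g).blocksFun ⟨i, hi1⟩) => _).prod
        = Kpi K (g ⟨i, hi2⟩) fun t => y (c.embedding ⟨i, hi2⟩ t)
    rw [Kpi]
    congr 1
    apply List.ext_getElem
    · simp only [List.length_ofFn]
      rw [lenComp_blocksFun]
      rfl
    · intro m hm1 hm2
      simp only [List.length_ofFn] at hm1 hm2
      simp only [List.getElem_ofFn]
      have hm1' : m < (g ⟨i, hi2⟩).length := by
        rw [lenComp_blocksFun] at hm1
        exact hm1
      set J := (lenComp c g).embedding ⟨i, hi1⟩ ⟨m, hm1⟩ with hJdef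
      have hJv : (J : ℕ) = (lenComp c g).sizeUpTo i + m := by
        rw [hJdef, Composition.coe_embedding]
      have hJlt : (lenComp c g).sizeUpTo i + m < (joinComp c g).length := by
        rw [← hJv]; exact J.2
      have hJeq : J = ⟨(lenComp c g).sizeUpTo i + m, hJlt⟩ := Fin.ext hJv
      rw [hJeq]
      apply K_congr K (joinComp_blocksFun c g i hi2 m hm1' hJlt)
      intro t
      congr 1
      apply Fin.ext
      rw [Composition.coe_embedding, Composition.coe_embedding, Composition.coe_embedding,
        joinComp_sizeUpTo c g i hi2 m (le_of_lt hm1')]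
      simp [add_assoc]


/-- absorb a factor into the head of an ordered product -/
theorem mul_ofFn_prod {A : Type*} [Monoid A] : ∀ {m : ℕ} (hm : 0 < m) (a : A)
    (F G : Fin m → A), G ⟨0, hm⟩ = a * F ⟨0, hm⟩ → (∀ i : Fin m, i ≠ ⟨0, hm⟩ → G i = F i) →
    a * (List.ofFn F).prod = (List.ofFn G).prod := by
  intro m hm a F G h0 hi
  cases m with
  | zero => omega
  | succ m =>
    rw [List.ofFn_succ, List.ofFn_succ, List.prod_cons, List.prod_cons, ← mul_assoc]
    have h0' : G 0 = a * F 0 := h0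
    rw [h0']
    exact congrArg (fun l => a * F 0 * List.prod l)
      (congrArg List.ofFn (funext fun i => (hi i.succ (Fin.succ_ne_zero i)).symm))

end BooleanIID

open BooleanIID in
/-- If `(x_j)` are Boolean independent and identically distributed
over `(E, B)` — in the sense that `E[b₀ x_{j₁} b₁ ⋯ x_{jₖ} bₖ]` equals
`b₀ · ∏→_{V ∈ inf_I ker j} E[∏→_{l ∈ V} x_{j_l} b_l]` for all `b_i ∈ B ∪ {1}` —
then `E[b₀ x_{j₁} b₁ ⋯ x_{jₖ} bₖ] = ∑_{π ∈ I(k), π ≤ ker j} K^E_π[b₀x₁b₁, x₁b₂, …, x₁bₖ]`,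
where `K^E` are the Boolean cumulants of `E`. -/
theorem boolean_iid_cumulant_formula {A : Type*} [Ring A]
    (S : NonUnitalSubring A) (E : A →+ A) (x : ℕ → A)
    (hEl : ∀ b ∈ S, ∀ a : A, E (b * a) = b * E a)
    (hEr : ∀ b ∈ S, ∀ a : A, E (a * b) = E a * b)
    (K : (k : ℕ) → (Fin k → A) → A)
    (hmom : ∀ (m : ℕ) (y : Fin m → A),
      E ((List.ofFn y).prod) = ∑ c : Composition m, Kpi K c y)
    (hiid : ∀ (k : ℕ) (j : Fin (k + 1) → ℕ) (b : Fin (k + 2) → A),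
      (∀ l, b l ∈ S ∨ b l = 1) →
      ∀ c : Composition (k + 1),
        (∀ l : Fin k, (c.index l.castSucc = c.index l.succ ↔ j l.castSucc = j l.succ)) →
        E (b 0 * (List.ofFn fun l : Fin (k + 1) => x (j l) * b l.succ).prod)
          = b 0 * Epi E c fun l => x (j l) * b l.succ)
    (hid : ∀ (m : ℕ) (i : ℕ) (b0 : A) (b : Fin m → A),
      (b0 ∈ S ∨ b0 = 1) → (∀ l, b l ∈ S ∨ b l = 1) →
      E (b0 * (List.ofFn fun l => x i * b l).prod)
        = E (b0 * (List.ofFn fun l => x 1 * b l).prod))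
    (k : ℕ) (j : Fin (k + 1) → ℕ) (b : Fin (k + 2) → A)
    (hb : ∀ l, b l ∈ S ∨ b l = 1) :
    E (b 0 * (List.ofFn fun l : Fin (k + 1) => x (j l) * b l.succ).prod)
      = ∑ c ∈ Finset.univ.filter
          (fun c : Composition (k + 1) => ∀ r s, c.index r = c.index s → j r = j s),
          Kpi K c fun l : Fin (k + 1) =>
            (if l = 0 then b 0 * x 1 else x 1) * b l.succ := by
  classical
  set y : Fin (k+1) → A := fun l : Fin (k + 1) =>
    (if l = 0 then b 0 * x 1 else x 1) * b l.succ with hy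
  set z : Fin (k+1) → A := fun l : Fin (k+1) => x 1 * b l.succ with hz
  set cs : Composition (k+1) := runC j with hcs
  have hadj : ∀ l : Fin k, (cs.index l.castSucc = cs.index l.succ ↔ j l.castSucc = j l.succ) := by
    intro l
    rw [← not_iff_not]
    exact (brk_iff cs l).trans (runC_brk_iff j l)
  have csF : ∀ r s : Fin (k+1), cs.index r = cs.index s → j r = j s := by
    intro r s h
    rcases le_total r s with hle | hle
    · exact chain_eq j s r hle fun l h1 h2 => (hadj l).1 (index_eq_of_between cs hle h l h1 h2)
    · exact (chain_eq j r s hle fun l h1 h2 =>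
        (hadj l).1 (index_eq_of_between cs hle h.symm l h1 h2)).symm
  have hlen0 : 0 < cs.length := cs.length_pos_of_pos (Nat.succ_pos k)
  rw [hiid k j b hb cs hadj]
  -- Step 2: replace x (j l) by x 1 inside each block
  have step2 : Epi E cs (fun l => x (j l) * b l.succ) = Epi E cs z := by
    simp only [Epi]
    apply congrArg List.prod
    apply congrArg List.ofFn
    funext i
    have hpos : 0 < cs.blocksFun i := cs.blocks_pos (cs.blocksFun_mem_blocks i)
    have hjc : ∀ t : Fin (cs.blocksFun i),
        j (cs.embedding i t) = j (cs.embedding i ⟨0, hpos⟩) :=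
      fun t => csF _ _ (by rw [cs.index_embedding, cs.index_embedding])
    have h1 : (List.ofFn fun t : Fin (cs.blocksFun i) =>
          x (j (cs.embedding i t)) * b (cs.embedding i t).succ)
        = List.ofFn fun t : Fin (cs.blocksFun i) =>
            x (j (cs.embedding i ⟨0, hpos⟩)) * b (cs.embedding i t).succ := by
      exact congrArg List.ofFn (funext fun t => by rw [hjc t])
    show E ((List.ofFn fun t : Fin (cs.blocksFun i) =>
        x (j (cs.embedding i t)) * b (cs.embedding i t).succ).prod) = _
    calc E ((List.ofFn fun t : Fin (cs.blocksFun i) =>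
            x (j (cs.embedding i t)) * b (cs.embedding i t).succ).prod)
        = E (1 * (List.ofFn fun t : Fin (cs.blocksFun i) =>
            x (j (cs.embedding i ⟨0, hpos⟩)) * b (cs.embedding i t).succ).prod) := by
          rw [h1, one_mul]
      _ = E (1 * (List.ofFn fun t : Fin (cs.blocksFun i) =>
            x 1 * b (cs.embedding i t).succ).prod) :=
          hid (cs.blocksFun i) _ 1 (fun t => b (cs.embedding i t).succ) (Or.inr rfl)
            (fun t => hb _)
      _ = E ((List.ofFn fun t : Fin (cs.blocksFun i) =>
            x 1 * b (cs.embedding i t).succ).prod) := by rw [one_mul]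
  rw [step2]
  -- Step 3: absorb b 0 into the first block
  have hidx0 : ∀ (i : Fin cs.length) (t : Fin (cs.blocksFun i)),
      i ≠ ⟨0, hlen0⟩ → cs.embedding i t ≠ 0 := by
    intro i t hi hcon
    apply hi
    have h1 := cs.index_embedding i t
    rw [hcon] at h1
    have h2 := index_zero' cs
    apply Fin.ext
    rw [h1] at h2
    exact h2
  have step3 : b 0 * Epi E cs z
      = (List.ofFn fun i : Fin cs.length =>
          E ((List.ofFn fun t : Fin (cs.blocksFun i) => y (cs.embedding i t)).prod)).prod := by
    simp only [Epi]
    apply mul_ofFn_prod hlen0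
    · -- head block
      have hpos0 : 0 < cs.blocksFun ⟨0, hlen0⟩ :=
        cs.blocks_pos (cs.blocksFun_mem_blocks ⟨0, hlen0⟩)
      have hemb0 : ∀ t : Fin (cs.blocksFun ⟨0, hlen0⟩),
          ((cs.embedding ⟨0, hlen0⟩ t : Fin (k+1)) : ℕ) = (t : ℕ) := by
        intro t
        rw [cs.coe_embedding]
        simp [Composition.sizeUpTo_zero]
      have habs : b 0 * (List.ofFn fun t : Fin (cs.blocksFun ⟨0, hlen0⟩) =>
            z (cs.embedding ⟨0, hlen0⟩ t)).prod
          = (List.ofFn fun t : Fin (cs.blocksFun ⟨0, hlen0⟩) =>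
            y (cs.embedding ⟨0, hlen0⟩ t)).prod := by
        apply mul_ofFn_prod hpos0
        · have h00 : cs.embedding ⟨0, hlen0⟩ ⟨0, hpos0⟩ = 0 := Fin.ext (hemb0 ⟨0, hpos0⟩)
          rw [h00]
          show (if (0 : Fin (k+1)) = 0 then b 0 * x 1 else x 1) * b (0 : Fin (k+1)).succ
            = b 0 * (x 1 * b (0 : Fin (k+1)).succ)
          rw [if_pos rfl, mul_assoc]
        · intro t ht
          have hne : cs.embedding ⟨0, hlen0⟩ t ≠ 0 := by
            intro hcon
            apply ht
            apply Fin.ext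
            have := hemb0 t
            rw [hcon] at this
            exact this.symm
          show (if cs.embedding ⟨0, hlen0⟩ t = 0 then b 0 * x 1 else x 1) * _ = _
          rw [if_neg hne]
      rw [← habs]
      rcases hb 0 with hS | h1
      · rw [hEl (b 0) hS]
      · rw [h1, one_mul, one_mul]
    · intro i hi
      have : (fun t : Fin (cs.blocksFun i) => y (cs.embedding i t))
          = fun t : Fin (cs.blocksFun i) => z (cs.embedding i t) := by
        funext t
        show (if cs.embedding i t = 0 then b 0 * x 1 else x 1) * _ = _
        rw [if_neg (hidx0 i t hi)]
      rw [this]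
  rw [step3]
  -- Step 4: moments to cumulants in each block
  have step4 : (List.ofFn fun i : Fin cs.length =>
        E ((List.ofFn fun t : Fin (cs.blocksFun i) => y (cs.embedding i t)).prod)).prod
      = (List.ofFn fun i : Fin cs.length =>
          ∑ d : Composition (cs.blocksFun i),
            Kpi K d fun t => y (cs.embedding i t)).prod := by
    apply congrArg List.prod
    exact congrArg List.ofFn (funext fun i =>
      hmom (cs.blocksFun i) fun t => y (cs.embedding i t))
  rw [step4]
  -- Step 5: distribute the product over the sums
  rw [prod_ofFn_sum (fun i => Composition (cs.blocksFun i))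
    (fun i d => Kpi K d fun t => y (cs.embedding i t))]
  -- Step 6: reindex via joinComp
  apply Finset.sum_bij (fun (gg : ∀ i : Fin cs.length, Composition (cs.blocksFun i)) _ =>
    joinComp cs gg)
  · -- maps into the filter
    intro gg _
    rw [Finset.mem_filter]
    refine ⟨Finset.mem_univ _, ?_⟩
    have hker : ∀ l : Fin k,
        (joinComp cs gg).index l.castSucc = (joinComp cs gg).index l.succ →
          j l.castSucc = j l.succ := by
      intro l hl
      by_contra hne
      obtain ⟨i0, hi0len, hi0⟩ := brk_lt_length cs l ((runC_brk_iff j l).2 hne)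
      have hbd : (joinComp cs gg).sizeUpTo ((lenComp cs gg).sizeUpTo i0) = cs.sizeUpTo i0 := by
        have := joinComp_sizeUpTo cs gg i0 hi0len 0 (Nat.zero_le _)
        simpa using this
      exact (brk_iff (joinComp cs gg) l).2 ⟨_, by rw [hbd, hi0]⟩ hl
    intro r s h
    rcases le_total r s with hle | hle
    · exact chain_eq j s r hle fun l h1 h2 =>
        hker l (index_eq_of_between _ hle h l h1 h2)
    · exact (chain_eq j r s hle fun l h1 h2 =>
        hker l (index_eq_of_between _ hle h.symm l h1 h2)).symm
  · -- injective
    intro g1 _ g2 _ h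
    exact joinComp_injective cs h
  · -- surjective
    intro c' hc'
    rw [Finset.mem_filter] at hc'
    obtain ⟨-, hF⟩ := hc'
    obtain ⟨gg, hgg⟩ := joinComp_surjective cs c' (by
      intro i hi
      rcases Nat.eq_zero_or_pos i with rfl | hipos
      · exact ⟨0, by rw [Composition.sizeUpTo_zero, Composition.sizeUpTo_zero]⟩
      rcases lt_or_ge i cs.length with hlt | hge
      · have hub : cs.sizeUpTo i < k + 1 := by
          have h1 := cs.sizeUpTo_strict_mono hlt
          have h2 := cs.sizeUpTo_le (i+1)
          omega
        have hlb : 0 < cs.sizeUpTo i := by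
          have h1 : cs.sizeUpTo 0 < cs.sizeUpTo (0+1) := cs.sizeUpTo_strict_mono hlen0
          have h2 : cs.sizeUpTo (0+1) ≤ cs.sizeUpTo i :=
            cs.monotone_sizeUpTo (show 0+1 ≤ i from hipos)
          rw [Composition.sizeUpTo_zero] at h1
          omega
        have hkk : cs.sizeUpTo i - 1 < k := by omega
        have hBrk : Brk cs ⟨cs.sizeUpTo i - 1, hkk⟩ :=
          ⟨i, by show cs.sizeUpTo i = cs.sizeUpTo i - 1 + 1; omega⟩
        have hjne := (runC_brk_iff j ⟨cs.sizeUpTo i - 1, hkk⟩).1 hBrk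
        have hidxne : c'.index (⟨cs.sizeUpTo i - 1, hkk⟩ : Fin k).castSucc
            ≠ c'.index (⟨cs.sizeUpTo i - 1, hkk⟩ : Fin k).succ := fun hcon => hjne (hF _ _ hcon)
        obtain ⟨i', hi'⟩ := (brk_iff c' ⟨cs.sizeUpTo i - 1, hkk⟩).1 hidxne
        refine ⟨i', ?_⟩
        rw [hi']
        show cs.sizeUpTo i - 1 + 1 = cs.sizeUpTo i
        omega
      · exact ⟨c'.length, by
          rw [c'.sizeUpTo_length, cs.sizeUpTo_ofLength_le i hge]⟩)
    exact ⟨gg, Finset.mem_univ _, hgg⟩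
  · -- values agree
    intro gg _
    exact (Kpi_joinComp cs gg K y).symm
end
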